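/- arXiv:2604.13376 — 4 statements merged into one kernel-verified Lean document; each statement's English description precedes it below -/
import Mathlib

section
/- Let φ̂₁ : X̂ → ℝ be bounded and measurable, let φ̂_n := Σ_{j=0}^{n-1} κ̂ʲφ̂₁ be its κ̂-additive process, and set φ_n(x) := sup_{z ∈ π⁻¹(x)} φ̂_n(z). Assume each φ_n is measurable. Then the sequence (φ_n) is κ-subadditive: for all n, m ≥ 1 and every x ∈ X, φ_{n+m}(x) ≤ φ_n(x) + ∫ φ_m d(κⁿ x), where κⁿ is the n-fold composition of the kernel κ. -/
open MeasureTheory ProbabilityTheory Filter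

noncomputable section

/-- The integral operator associated with a Markov kernel:
`(kernelOp q u) z = ∫ u d(q z)`. -/
def kernelOp {Z : Type*} [MeasurableSpace Z] (q : Kernel Z Z) (u : Z → ℝ) : Z → ℝ :=
  fun z => ∫ w, u w ∂(q z)

/-- `j`-fold application of the integral operator of a kernel. -/
def kernelOpIter {Z : Type*} [MeasurableSpace Z] (q : Kernel Z Z) : ℕ → (Z → ℝ) → (Z → ℝ)
  | 0 => fun u => u
  | n + 1 => fun u => kernelOp q (kernelOpIter q n u)

/-- The `n`-fold composition of a kernel, as a measure-valued map:
`kernelIterMeasure q n z` is the law of the `n`-th step of the chain started at `z`. -/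
def kernelIterMeasure {Z : Type*} [MeasurableSpace Z] (q : Kernel Z Z) : ℕ → Z → Measure Z
  | 0 => fun z => Measure.dirac z
  | n + 1 => fun z => (kernelIterMeasure q n z).bind (fun w => q w)

/-! The additive process is a cocycle: by Chapman–Kolmogorov,
`φ̂_{n+m}(z) = φ̂_n(z) + ∫ φ̂_m d(κ̂ⁿ z)`. For `z` in the fibre over `x`, bound
`φ̂_n(z) ≤ φ_n(x)` and `φ̂_m ≤ φ_m ∘ π`, and push `κ̂ⁿ z` forward along `π`: intertwining passes
to iterates, so the result is `κⁿ x`. Taking the supremum over the fibre gives the claim. -/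

namespace ProbabilityTheory.Kernel

variable {α β γ : Type*} [MeasurableSpace α] [MeasurableSpace β] [MeasurableSpace γ]

lemma one_eq_id : (1 : Kernel α α) = Kernel.id := rfl

lemma mul_eq_comp (η κ : Kernel α α) : η * κ = η ∘ₖ κ := rfl

instance isMarkovKernel_pow (κ : Kernel α α) [IsMarkovKernel κ] (n : ℕ) :
    IsMarkovKernel (κ ^ n) := by
  induction n with
  | zero => rw [pow_zero, one_eq_id]; infer_instance
  | succ n ih => rw [pow_succ, mul_eq_comp]; infer_instance

lemma comap_comp_left (η : Kernel β β) (κ : Kernel α β) {f : γ → α} (hf : Measurable f) :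
    (η ∘ₖ κ).comap f hf = η ∘ₖ κ.comap f hf := by
  ext1 a; simp [comp_apply, comap_apply]

lemma map_pow_apply_eq_pow_apply {κh : Kernel β β} {κ : Kernel α α} {π : β → α}
    (hπ : Measurable π) (h : ∀ z, (κh z).map π = κ (π z)) (n : ℕ) (z : β) :
    ((κh ^ n) z).map π = (κ ^ n) (π z) := by
  have hker : κh.map π = κ.comap π hπ := by ext1 z; rw [map_apply _ hπ, comap_apply, h]
  suffices (κh ^ n).map π = (κ ^ n).comap π hπ by rw [← map_apply _ hπ, this, comap_apply]
  induction n with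
  | zero => simp [one_eq_id, id_map hπ, id_comap]
  | succ n ih =>
    rw [pow_succ', mul_eq_comp, map_comp, hker, ← comp_map _ _ hπ, ih, pow_succ', mul_eq_comp,
      comap_comp_left]

end ProbabilityTheory.Kernel

open Kernel

lemma integrable_of_abs_le {β : Type*} [MeasurableSpace β] {μ : Measure β} [IsFiniteMeasure μ]
    {u : β → ℝ} (hu : Measurable u) {B : ℝ} (hB : ∀ b, |u b| ≤ B) : Integrable u μ :=
  .of_bound hu.aestronglyMeasurable B (ae_of_all _ hB)

section kernelOpIter

variable {Z : Type*} [MeasurableSpace Z] (q : Kernel Z Z)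

lemma kernelIterMeasure_eq_pow (n : ℕ) (z : Z) : kernelIterMeasure q n z = (q ^ n) z := by
  induction n with
  | zero => simp [kernelIterMeasure, one_eq_id, Kernel.id_apply]
  | succ n ih => rw [pow_succ', mul_eq_comp, comp_apply, ← ih]; rfl

variable [IsMarkovKernel q] {u : Z → ℝ} {B : ℝ}

lemma kernelOpIter_eq_integral_pow (hu : Measurable u) (hB : ∀ z, |u z| ≤ B) (n : ℕ) :
    kernelOpIter q n u = fun z ↦ ∫ w, u w ∂(q ^ n) z := by
  induction n with
  | zero =>
    ext z
    simp [kernelOpIter, one_eq_id, Kernel.id_apply, integral_dirac' _ _ hu.stronglyMeasurable]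
  | succ n ih =>
    ext z
    rw [pow_succ, mul_eq_comp, integral_comp (integrable_of_abs_le hu hB)]
    simp only [kernelOpIter, kernelOp, ih]

lemma measurable_kernelOpIter (hu : Measurable u) (hB : ∀ z, |u z| ≤ B) (n : ℕ) :
    Measurable (kernelOpIter q n u) := by
  rw [kernelOpIter_eq_integral_pow q hu hB]
  exact hu.stronglyMeasurable.integral_kernel.measurable

lemma abs_kernelOpIter_le (hu : Measurable u) (hB : ∀ z, |u z| ≤ B) (n : ℕ) (z : Z) :
    |kernelOpIter q n u z| ≤ B := by
  rw [kernelOpIter_eq_integral_pow q hu hB]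
  simpa using norm_integral_le_of_norm_le_const (μ := (q ^ n) z) (f := u) (ae_of_all _ hB)

lemma kernelOpIter_add (hu : Measurable u) (hB : ∀ z, |u z| ≤ B) (n j : ℕ) (z : Z) :
    kernelOpIter q (n + j) u z = ∫ w, kernelOpIter q j u w ∂(q ^ n) z := by
  rw [kernelOpIter_eq_integral_pow q hu hB, kernelOpIter_eq_integral_pow q hu hB, add_comm,
    Kernel.pow_add]
  exact integral_comp (integrable_of_abs_le hu hB)

lemma sum_range_add_kernelOpIter (hu : Measurable u) (hB : ∀ z, |u z| ≤ B) (n m : ℕ) (z : Z) :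
    ∑ j ∈ Finset.range (n + m), kernelOpIter q j u z = ∑ j ∈ Finset.range n, kernelOpIter q j u z
      + ∫ w, ∑ j ∈ Finset.range m, kernelOpIter q j u w ∂(q ^ n) z := by
  rw [Finset.sum_range_add, integral_finsetSum _ fun j _ ↦
    integrable_of_abs_le (measurable_kernelOpIter q hu hB j) (abs_kernelOpIter_le q hu hB j)]
  simp_rw [kernelOpIter_add q hu hB]

lemma abs_sum_range_kernelOpIter_le (hu : Measurable u) (hB : ∀ z, |u z| ≤ B) (n : ℕ) (z : Z) :
    |∑ j ∈ Finset.range n, kernelOpIter q j u z| ≤ n * B :=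
  calc |∑ j ∈ Finset.range n, kernelOpIter q j u z|
      ≤ ∑ j ∈ Finset.range n, |kernelOpIter q j u z| := Finset.abs_sum_le_sum_abs _ _
    _ ≤ ∑ _ ∈ Finset.range n, B := Finset.sum_le_sum fun j _ ↦ abs_kernelOpIter_le q hu hB j z
    _ = n * B := by simp

end kernelOpIter

lemma bddAbove_image_of_abs_le {Z : Type*} {f : Z → ℝ} {B : ℝ} (hB : ∀ z, |f z| ≤ B)
    (s : Set Z) : BddAbove (f '' s) :=
  ⟨B, by rintro _ ⟨z, -, rfl⟩; exact le_of_abs_le (hB z)⟩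

lemma abs_sSup_image_le {Z : Type*} {f : Z → ℝ} {B : ℝ} (hB : ∀ z, |f z| ≤ B) {s : Set Z}
    (hs : s.Nonempty) : |sSup (f '' s)| ≤ B := by
  obtain ⟨z, hz⟩ := hs
  refine abs_le.2 ⟨?_, csSup_le ⟨f z, z, hz, rfl⟩ ?_⟩
  · exact (neg_le_of_abs_le (hB z)).trans
      (le_csSup (bddAbove_image_of_abs_le hB s) ⟨z, hz, rfl⟩)
  · rintro _ ⟨w, -, rfl⟩
    exact le_of_abs_le (hB w)

/-- The fiberwise maximization of a `κ̂`-additive process is `κ`-subadditive. -/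
theorem fiberwise_sup_is_subadditive
    {Xh X : Type*} [MeasurableSpace Xh] [MeasurableSpace X]
    (π : Xh → X) (hπ_meas : Measurable π) (hπ_surj : Function.Surjective π)
    (κh : Kernel Xh Xh) [IsMarkovKernel κh]
    (κ : Kernel X X) [IsMarkovKernel κ]
    (h_intertwine : ∀ z : Xh, (κh z).map π = κ (π z))
    (φ1 : Xh → ℝ) (hφ1_meas : Measurable φ1)
    (C : ℝ) (hφ1_bdd : ∀ z, |φ1 z| ≤ C)
    (φh : ℕ → Xh → ℝ)
    (hφh : ∀ n z, φh n z = ∑ j ∈ Finset.range n, kernelOpIter κh j φ1 z)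
    (φ : ℕ → X → ℝ)
    (hφ : ∀ n x, φ n x = sSup (φh n '' (π ⁻¹' {x})))
    (hφ_meas : ∀ n, Measurable (φ n)) :
    ∀ n m : ℕ, 1 ≤ n → 1 ≤ m → ∀ x : X,
      φ (n + m) x ≤ φ n x + ∫ y, φ m y ∂(kernelIterMeasure κ n x) := by
  intro n m _ _ x
  have hfiber (y : X) : (π ⁻¹' {y}).Nonempty :=
    hπ_surj.nonempty_preimage.2 (Set.singleton_nonempty y)
  have hφh_bdd (k : ℕ) (z : Xh) : |φh k z| ≤ k * C := by
    rw [hφh]; exact abs_sum_range_kernelOpIter_le κh hφ1_meas hφ1_bdd k z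
  have hφh_meas (k : ℕ) : Measurable (φh k) := by
    rw [funext (hφh k)]
    exact Finset.measurable_fun_sum _ fun j _ ↦ measurable_kernelOpIter κh hφ1_meas hφ1_bdd j
  have hφh_le_φ (k : ℕ) (z : Xh) : φh k z ≤ φ k (π z) := by
    rw [hφ]; exact le_csSup (bddAbove_image_of_abs_le (hφh_bdd k) _) ⟨z, rfl, rfl⟩
  have hφ_bdd (k : ℕ) (y : X) : |φ k y| ≤ k * C := by
    rw [hφ]; exact abs_sSup_image_le (hφh_bdd k) (hfiber y)
  rw [hφ]
  refine csSup_le ((hfiber x).image _) ?_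
  rintro _ ⟨z, rfl, rfl⟩
  calc φh (n + m) z = φh n z + ∫ w, φh m w ∂(κh ^ n) z := by
        simp only [hφh]; exact sum_range_add_kernelOpIter κh hφ1_meas hφ1_bdd n m z
    _ ≤ φ n (π z) + ∫ w, φ m (π w) ∂(κh ^ n) z := by
        gcongr ?_ + ?_
        · exact hφh_le_φ n z
        · exact integral_mono (integrable_of_abs_le (hφh_meas m) (hφh_bdd m))
            (integrable_of_abs_le ((hφ_meas m).comp hπ_meas) fun w ↦ hφ_bdd m (π w))
            fun w ↦ hφh_le_φ m w
    _ = φ n (π z) + ∫ y, φ m y ∂kernelIterMeasure κ n (π z) := by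
        rw [kernelIterMeasure_eq_pow, ← map_pow_apply_eq_pow_apply hπ_meas h_intertwine,
          integral_map hπ_meas.aemeasurable (hφ_meas m).aestronglyMeasurable]

end
end

section
/- Let X and Y be Polish spaces with their Borel σ-algebras, let E ⊂ X × Y be a Borel set, and let u : X × Y → EReal be a Borel measurable function. Then the function M u : X → EReal defined by (Mu)(x) := ⨆_{y ∈ E_x} u(x, y), where E_x = {y ∈ Y : (x,y) ∈ E} and the supremum over an empty set is ⊥, is universally measurable: for every probability measure μ on X, the function Mu is AEMeasurable with respect to μ. -/
/-!
For every `a`, the set `{x | a < Mu x}` is the projection of the Borel set `E ∩ u ⁻¹' Ioi a`,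
hence analytic, and analytic sets are null-measurable for every finite measure. For the range
of a continuous `f` on Baire space this is capacitability: fixing bounds `n 0, n 1, …` on the
coordinates one at a time, each losing little measure, the closed set
`⋂ k, closure (f '' {x | ∀ i < k, x i ≤ n i})` still carries almost all of the measure of
`range f`, and by compactness of the box `{x | ∀ i, x i ≤ n i}` it lies in its image.
-/

open MeasureTheory Set Filter Topology ENNReal

theorem exists_measure_iUnion_le_add {α : Type*} [MeasurableSpace α] (μ : Measure α)
    {s : ℕ → Set α} (hs : Monotone s) (hμs : μ (⋃ m, s m) ≠ ∞) {δ : ℝ≥0∞} (hδ : δ ≠ 0) :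
    ∃ m, μ (⋃ m, s m) ≤ μ (s m) + δ := by
  rw [hs.measure_iUnion] at hμs ⊢
  obtain ⟨m, hm⟩ := lt_iSup_iff.1 <|
    (ENNReal.lt_add_right hμs hδ).trans_eq (ENNReal.iSup_add (fun m => μ (s m)))
  exact ⟨m, hm.le⟩

theorem exists_forall_measure_range_le_image_box_add {α : Type*} [MeasurableSpace α]
    (μ : Measure α) [IsFiniteMeasure μ] (f : (ℕ → ℕ) → α) {ε : ℝ≥0∞} (hε : ε ≠ 0) :
    ∃ n : ℕ → ℕ, ∀ k, μ (range f) ≤ μ (f '' {x | ∀ i < k, x i ≤ n i}) + ε := by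
  obtain ⟨δ, hδ, hδε⟩ := ENNReal.exists_pos_sum_of_countable' hε ℕ
  have step : ∀ (s : Set (ℕ → ℕ)) k, ∃ m, μ (f '' s) ≤ μ (f '' (s ∩ {x | x k ≤ m})) + δ k := by
    intro s k
    have hcover : f '' s = ⋃ m, f '' (s ∩ {x | x k ≤ m}) := by
      ext y
      simp only [mem_image, mem_iUnion, mem_inter_iff, mem_ofPred_eq]
      exact ⟨fun ⟨x, hx, hxy⟩ => ⟨x k, x, ⟨hx, le_rfl⟩, hxy⟩,
        fun ⟨_, x, ⟨hx, _⟩, hxy⟩ => ⟨x, hx, hxy⟩⟩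
    rw [hcover]
    exact exists_measure_iUnion_le_add μ (s := fun m => f '' (s ∩ {x | x k ≤ m}))
      (fun m m' h => image_mono (inter_subset_inter_right _ fun x hx => le_trans hx h))
      (measure_ne_top _ _) (hδ k).ne'
  choose M hM using step
  let L : ℕ → Set (ℕ → ℕ) := fun k => Nat.rec univ (fun k s => s ∩ {x | x k ≤ M s k}) k
  let n : ℕ → ℕ := fun k => M (L k) k
  have hL_succ : ∀ k, L (k + 1) = L k ∩ {x | x k ≤ n k} := fun k => rfl
  have hL_anti : Antitone L :=
    antitone_nat_of_succ_le fun k => (hL_succ k).trans_subset inter_subset_left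
  have hL_le : ∀ k, L k ⊆ {x | ∀ i < k, x i ≤ n i} := fun k x hx i hi =>
    ((hL_succ i).subset (hL_anti (Nat.succ_le_of_lt hi) hx)).2
  have hμL : ∀ k, μ (range f) ≤ μ (f '' L k) + ∑ i ∈ Finset.range k, δ i := by
    intro k
    induction k with
    | zero => simp [L, image_univ]
    | succ k ih =>
      calc μ (range f) ≤ μ (f '' L k) + ∑ i ∈ Finset.range k, δ i := ih
        _ ≤ μ (f '' L (k + 1)) + δ k + ∑ i ∈ Finset.range k, δ i := by gcongr; exact hM _ k
        _ = μ (f '' L (k + 1)) + ∑ i ∈ Finset.range (k + 1), δ i := by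
          rw [Finset.sum_range_succ, add_assoc, add_comm (δ k)]
  exact ⟨n, fun k => (hμL k).trans <| add_le_add (measure_mono (image_mono (hL_le k)))
    ((ENNReal.sum_le_tsum _).trans hδε.le)⟩

theorem nullMeasurableSet_of_forall_exists_subset_measure_le_add {α : Type*} [MeasurableSpace α]
    {μ : Measure α} {s : Set α} (hμs : μ s ≠ ∞)
    (h : ∀ ε ≠ 0, ∃ K ⊆ s, NullMeasurableSet K μ ∧ μ s ≤ μ K + ε) :
    NullMeasurableSet s μ := by
  choose K hKs hK hμK using fun j : ℕ =>
    h (j : ℝ≥0∞)⁻¹ (ENNReal.inv_ne_zero.2 (ENNReal.natCast_ne_top j))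
  have hle : μ s ≤ μ (⋃ j, K j) := ENNReal.le_of_forall_pos_le_add fun ε hε _ => by
    obtain ⟨j, hj⟩ := ENNReal.exists_inv_nat_lt (ENNReal.coe_ne_zero.2 hε.ne')
    exact (hμK j).trans (add_le_add (measure_mono (subset_iUnion K j)) hj.le)
  exact (NullMeasurableSet.iUnion hK).congr
    (ae_eq_of_subset_of_measure_ge (iUnion_subset hKs) hle (.iUnion hK) hμs)

section Capacitability

variable {α : Type*} [TopologicalSpace α] [T2Space α] [FirstCountableTopology α]

theorem mem_range_of_forall_mem_closure_image {f : (ℕ → ℕ) → α} (hf : Continuous f)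
    (n : ℕ → ℕ) {y : α} (hy : ∀ k, y ∈ closure (f '' {x | ∀ i < k, x i ≤ n i})) : y ∈ range f := by
  obtain ⟨U, hU⟩ := (𝓝 y).exists_antitone_basis
  have hw : ∀ k, ∃ w : ℕ → ℕ, (∀ i < k, w i ≤ n i) ∧ f w ∈ U k := fun k => by
    obtain ⟨_, hfw, w, hw, rfl⟩ := mem_closure_iff_nhds.1 (hy k) (U k) (hU.mem k)
    exact ⟨w, hw, hfw⟩
  choose w hwn hwU using hw
  -- Truncating `w k` after its first `k` coordinates puts it in a compact box.
  let z : ℕ → ℕ → ℕ := fun k i => if i < k then w k i else 0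
  have hz : ∀ k, z k ∈ univ.pi fun i => Iic (n i) := fun k i _ => by
    by_cases hi : i < k <;> simp [z, hi, hwn k i]
  obtain ⟨x, -, φ, hφ, hzx⟩ :=
    (isCompact_univ_pi fun i => (finite_Iic (n i)).isCompact).tendsto_subseq hz
  have hwx : Tendsto (w ∘ φ) atTop (𝓝 x) := by
    refine tendsto_pi_nhds.2 fun i => (tendsto_pi_nhds.1 hzx i).congr' ?_
    filter_upwards [eventually_gt_atTop i] with j hj
    simp [z, hj.trans_le hφ.le_apply]
  exact ⟨x, tendsto_nhds_unique ((hf.tendsto x).comp hwx)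
    ((hU.tendsto hwU).comp hφ.tendsto_atTop)⟩

theorem exists_isClosed_subset_range_measure_le_add [MeasurableSpace α] [OpensMeasurableSpace α]
    (μ : Measure α) [IsFiniteMeasure μ] {f : (ℕ → ℕ) → α} (hf : Continuous f) {ε : ℝ≥0∞}
    (hε : ε ≠ 0) :
    ∃ K, IsClosed K ∧ K ⊆ range f ∧ μ (range f) ≤ μ K + ε := by
  obtain ⟨n, hn⟩ := exists_forall_measure_range_le_image_box_add μ f hε
  have hanti : Antitone fun k => closure (f '' {x | ∀ i < k, x i ≤ n i}) := fun j k hjk =>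
    closure_mono (image_mono fun x hx i hi => hx i (hi.trans_le hjk))
  refine ⟨⋂ k, closure (f '' {x | ∀ i < k, x i ≤ n i}), isClosed_iInter fun _ => isClosed_closure,
    fun y hy => mem_range_of_forall_mem_closure_image hf n (mem_iInter.1 hy), ?_⟩
  rw [hanti.measure_iInter (fun _ => isClosed_closure.nullMeasurableSet)
    ⟨0, measure_ne_top _ _⟩, ENNReal.iInf_add]
  exact le_iInf fun k => (hn k).trans (add_le_add_left (measure_mono subset_closure) ε)

theorem MeasureTheory.AnalyticSet.nullMeasurableSet [MeasurableSpace α] [OpensMeasurableSpace α]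
    (μ : Measure α) [IsFiniteMeasure μ] {s : Set α} (hs : AnalyticSet s) :
    NullMeasurableSet s μ := by
  rw [AnalyticSet] at hs
  rcases hs with rfl | ⟨f, hf, rfl⟩
  · exact nullMeasurableSet_empty
  · refine nullMeasurableSet_of_forall_exists_subset_measure_le_add (measure_ne_top _ _)
      fun ε hε => ?_
    obtain ⟨K, hK, hKf, hμK⟩ := exists_isClosed_subset_range_measure_le_add μ hf hε
    exact ⟨K, hKf, hK.nullMeasurableSet, hμK⟩

end Capacitability

theorem preimage_Ioi_iSup_mem_section {X Y α : Type*} [CompleteLinearOrder α]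
    (E : Set (X × Y)) (u : X × Y → α) (a : α) :
    (fun x => ⨆ y ∈ {y | (x, y) ∈ E}, u (x, y)) ⁻¹' Ioi a = Prod.fst '' (E ∩ u ⁻¹' Ioi a) := by
  ext x
  simp only [mem_preimage, mem_Ioi, lt_iSup_iff, mem_ofPred_eq, mem_image, mem_inter_iff,
    Prod.exists, exists_and_right, exists_eq_right, exists_prop]

/-- The fiberwise supremum over the sections of a Borel set of a Borel
extended-real-valued function is universally measurable: it is `AEMeasurable` with respect
to every probability measure on the base. -/
theorem fiberwise_sup_universally_measurable
    {X Y : Type*}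
    [TopologicalSpace X] [PolishSpace X] [MeasurableSpace X] [BorelSpace X]
    [TopologicalSpace Y] [PolishSpace Y] [MeasurableSpace Y] [BorelSpace Y]
    (E : Set (X × Y)) (hE : MeasurableSet E)
    (u : X × Y → EReal) (hu : Measurable u)
    (Mu : X → EReal)
    (hMu : ∀ x, Mu x = ⨆ y ∈ {y : Y | (x, y) ∈ E}, u (x, y)) :
    ∀ μ : Measure X, IsProbabilityMeasure μ → AEMeasurable Mu μ := by
  intro μ _
  have hsuper : ∀ a, NullMeasurableSet (Mu ⁻¹' Ioi a) μ := fun a => by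
    rw [show Mu = _ from funext hMu, preimage_Ioi_iSup_mem_section]
    exact ((hE.inter (hu measurableSet_Ioi)).analyticSet.image_of_continuous
      continuous_fst).nullMeasurableSet μ
  have hnull : NullMeasurable Mu μ := measurable_of_Ioi (δ := NullMeasurableSpace X μ) hsuper
  exact hnull.aemeasurable
end

section
/- Let X be a standard Borel space, Y a compact metric space, and μ a probability measure on X. Let (ν_n) be a sequence in Prob_μ(X × Y) converging to ν ∈ Prob_μ(X × Y) in the Young-measure topology. Then for every bounded measurable u : X × Y → ℝ such that y ↦ u(x,y) is upper semicontinuous for every x ∈ X, one has limsup_{n→∞} ∫ u dν_n ≤ ∫ u dν. -/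
/-!
Approximate `u` from above by Carathéodory functions. Let `L` be a finite measure dominating every
`ν n` and `νlim`. Disintegrating the image of `L` under `p ↦ (p.1, p.2, u p)` gives a kernel `R`
from `X` to `Y × ℝ` with `R x` carried by the hypograph of `u (x, ·)`. Over the countably many
rational boxes `B = ball c r × ball q r` with `R x B > 0` and `r ≤ (k + 1)⁻²`, take the supremum
`T k (x, ·)` of the `k`-Lipschitz cones of height `q + r` over `ball c r`. It is measurable because
`x ↦ R x B` is, and Lipschitz in `y`. For `L`-almost every `(x, y)` every box containing
`(y, u (x, y))` is charged by `R x`, so `u ≤ T k`; and since charged boxes meet the hypograph,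
upper semicontinuity of `u (x, ·)` forces `T k → u`. Hence
`limsup ∫ u ∂ν n ≤ ∫ T k ∂νlim → ∫ u ∂νlim`.
-/

open MeasureTheory Filter ProbabilityTheory TopologicalSpace
open scoped Topology NNReal

noncomputable section

theorem LipschitzWith.ciSup {ι α : Type*} [Nonempty ι] [PseudoMetricSpace α] {K : ℝ≥0}
    {f : ι → α → ℝ}
    (hf : ∀ i, LipschitzWith K (f i)) (hbdd : ∀ x, BddAbove (Set.range fun i => f i x)) :
    LipschitzWith K fun x => ⨆ i, f i x :=
  LipschitzWith.of_le_add_mul K fun x y => ciSup_le fun i =>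
    ((hf i).le_add_mul x y).trans (add_le_add_left (le_ciSup (hbdd y) i) _)

section CompProd

variable {α β : Type*} [MeasurableSpace α] [MeasurableSpace β]

theorem MeasureTheory.Measure.ae_compProd_kernel_ne_zero_of_mem {ι : Type*} [Countable ι]
    (μ : Measure α) (κ : Kernel α β) {s : ι → Set β} (hs : ∀ i, MeasurableSet (s i)) :
    ∀ᵐ p ∂(μ ⊗ₘ κ), ∀ i, p.2 ∈ s i → κ p.1 (s i) ≠ 0 := by
  refine Measure.ae_compProd_of_ae_ae ?_ (ae_of_all _ fun a => ae_all_iff.2 fun i => ?_)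
  · exact measurableSet_setOfPred.2 <| Measurable.forall fun i =>
      (measurableSet_setOfPred.1 (measurable_snd (hs i))).imp
        (measurableSet_setOfPred.1 (measurable_fst
          ((κ.measurable_coe (hs i)) (measurableSet_singleton 0).compl)))
  · by_cases h : κ a (s i) = 0
    · exact (measure_eq_zero_iff_ae_notMem.1 h).mono fun _ hb hb' => absurd hb' hb
    · exact ae_of_all _ fun _ _ => h

theorem MeasureTheory.Measure.ae_kernel_preimage_prodMk_eq_zero {μ : Measure α} [SFinite μ]
    {κ : Kernel α β} [IsSFiniteKernel κ] {E : Set (α × β)} (hE : (μ ⊗ₘ κ) E = 0) :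
    ∀ᵐ a ∂μ, κ a (Prod.mk a ⁻¹' E) = 0 :=
  (Measure.ae_ae_of_ae_compProd (measure_eq_zero_iff_ae_notMem.1 hE)).mono fun _ h =>
    measure_eq_zero_iff_ae_notMem.2 h

end CompProd

theorem limsup_integral_le_of_ae_le {α : Type*} [MeasurableSpace α] {ν : ℕ → Measure α}
    [∀ n, IsProbabilityMeasure (ν n)] {u g : α → ℝ} (hu : Measurable u) {C : ℝ}
    (hC : ∀ p, |u p| ≤ C) (hg : ∀ n, Integrable g (ν n)) (hug : ∀ n, u ≤ᵐ[ν n] g) {I : ℝ}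
    (hI : Tendsto (fun n => ∫ p, g p ∂ν n) atTop (𝓝 I)) :
    limsup (fun n => ∫ p, u p ∂ν n) atTop ≤ I := by
  have hC' : ∀ p, ‖u p‖ ≤ C := hC
  have hbdd : IsBoundedUnder (· ≥ ·) atTop fun n => ∫ p, u p ∂ν n := by
    refine isBoundedUnder_of ⟨-C, fun n => neg_le_of_abs_le ?_⟩
    simpa using norm_integral_le_of_norm_le_const (μ := ν n) (ae_of_all _ hC')
  calc limsup (fun n => ∫ p, u p ∂ν n) atTop ≤ limsup (fun n => ∫ p, g p ∂ν n) atTop :=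
        limsup_le_limsup (Eventually.of_forall fun n => integral_mono_ae
          (Integrable.of_bound hu.aestronglyMeasurable C (ae_of_all _ hC')) (hg n) (hug n))
          hbdd.isCoboundedUnder_le hI.isBoundedUnder_le
    _ = I := hI.limsup_eq

namespace YoungMeasure

section LipschitzCone

variable {Y : Type*} [PseudoMetricSpace Y]

def lipschitzCone (k : ℕ) (c : Y) (q r : ℝ) (y : Y) : ℝ :=
  q + r - k * max 0 (dist y c - r)

theorem lipschitzCone_le (k : ℕ) (c : Y) (q r : ℝ) (y : Y) :
    lipschitzCone k c q r y ≤ q + r := by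
  unfold lipschitzCone
  nlinarith [le_max_left 0 (dist y c - r), (Nat.cast_nonneg k : (0 : ℝ) ≤ k)]

theorem lipschitzCone_of_dist_le (k : ℕ) {c y : Y} (q : ℝ) {r : ℝ} (h : dist y c ≤ r) :
    lipschitzCone k c q r y = q + r := by
  simp [lipschitzCone, h]

theorem lipschitzCone_le_of_dist_lt (k : ℕ) {c z : Y} (q : ℝ) {r : ℝ} (hz : dist z c < r)
    (y : Y) : lipschitzCone k c q r y ≤ q + r + 2 * k * r - k * dist y z := by
  have hmax : dist y z - 2 * r ≤ max 0 (dist y c - r) :=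
    le_max_of_le_right (by linarith [dist_triangle_right y z c])
  have := mul_le_mul_of_nonneg_left hmax (Nat.cast_nonneg (α := ℝ) k)
  unfold lipschitzCone
  linarith

theorem lipschitzWith_lipschitzCone (k : ℕ) (c : Y) (q r : ℝ) :
    LipschitzWith k (lipschitzCone k c q r) := by
  refine LipschitzWith.of_le_add_mul _ fun y y' => ?_
  have htri : dist y' c ≤ dist y y' + dist y c := dist_triangle_left y' c y
  have hmax : max 0 (dist y' c - r) ≤ max 0 (dist y c - r) + dist y y' :=
    max_le (by positivity) (by linarith [le_max_right 0 (dist y c - r)])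
  have := mul_le_mul_of_nonneg_left hmax (Nat.cast_nonneg (α := ℝ) k)
  simp only [lipschitzCone, NNReal.coe_natCast]
  linarith

end LipschitzCone

def approxRadius (k : ℕ) : ℝ := (1 / ((k : ℝ) + 1)) ^ 2

theorem approxRadius_pos (k : ℕ) : 0 < approxRadius k := by
  unfold approxRadius; positivity

theorem succ_mul_approxRadius_le_one (k : ℕ) : ((k : ℝ) + 1) * approxRadius k ≤ 1 := by
  have hk : (1 : ℝ) ≤ k + 1 := by simp
  rw [approxRadius, div_pow, one_pow, sq, mul_one_div, div_mul_eq_div_div,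
    div_self (by positivity)]
  exact div_le_one_of_le₀ hk (by positivity)

theorem approxRadius_le_one (k : ℕ) : approxRadius k ≤ 1 := by
  nlinarith [succ_mul_approxRadius_le_one k, approxRadius_pos k,
    (Nat.cast_nonneg k : (0 : ℝ) ≤ k)]

theorem natCast_mul_approxRadius_le_one (k : ℕ) : (k : ℝ) * approxRadius k ≤ 1 := by
  nlinarith [succ_mul_approxRadius_le_one k, approxRadius_pos k]

theorem tendsto_approxRadius : Tendsto approxRadius atTop (𝓝 0) := by
  rw [show approxRadius = fun k : ℕ => (1 / ((k : ℝ) + 1)) ^ 2 from rfl]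
  simpa using (tendsto_one_div_add_atTop_nhds_zero_nat (𝕜 := ℝ)).pow 2

section UpperApprox

variable {X Y : Type*} [MeasurableSpace X] [PseudoMetricSpace Y] [SeparableSpace Y] [Nonempty Y]
  [MeasurableSpace Y] (R : Kernel X (Y × ℝ)) (C : ℝ)

def ratBall (j : ℕ × ℚ × ℚ) : Set (Y × ℝ) :=
  Metric.ball (denseSeq Y j.1) j.2.2 ×ˢ Metric.ball (j.2.1 : ℝ) j.2.2

def IsActiveBall (k : ℕ) (j : ℕ × ℚ × ℚ) (x : X) : Prop :=
  |(j.2.1 : ℝ)| ≤ C + 1 ∧ 0 < (j.2.2 : ℝ) ∧ (j.2.2 : ℝ) ≤ approxRadius k ∧ 0 < R x (ratBall j)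

open Classical in
def approxTerm (k : ℕ) (j : ℕ × ℚ × ℚ) (x : X) (y : Y) : ℝ :=
  if IsActiveBall R C k j x then lipschitzCone k (denseSeq Y j.1) j.2.1 j.2.2 y else -C

def upperApprox (k : ℕ) (p : X × Y) : ℝ :=
  ⨆ j, approxTerm R C k j p.1 p.2

theorem approxTerm_le (k : ℕ) (j : ℕ × ℚ × ℚ) (x : X) (y : Y) :
    approxTerm R C k j x y ≤ |C| + 2 := by
  unfold approxTerm
  split_ifs with h
  · obtain ⟨hq, -, hr, -⟩ := h
    linarith [lipschitzCone_le k (denseSeq Y j.1) j.2.1 j.2.2 y, le_abs_self C,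
      le_abs_self (j.2.1 : ℝ), approxRadius_le_one k]
  · linarith [neg_abs_le C]

theorem bddAbove_range_approxTerm (k : ℕ) (x : X) (y : Y) :
    BddAbove (Set.range fun j => approxTerm R C k j x y) :=
  ⟨|C| + 2, Set.forall_mem_range.2 fun j => approxTerm_le R C k j x y⟩

theorem neg_le_upperApprox (k : ℕ) (p : X × Y) : -C ≤ upperApprox R C k p :=
  le_ciSup_of_le (bddAbove_range_approxTerm R C k p.1 p.2) (0, 0, 0)
    (by simp [approxTerm, IsActiveBall])

theorem abs_upperApprox_le (k : ℕ) (p : X × Y) : |upperApprox R C k p| ≤ |C| + 2 :=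
  abs_le.2 ⟨by linarith [neg_le_upperApprox R C k p, le_abs_self C],
    ciSup_le fun j => approxTerm_le R C k j p.1 p.2⟩

theorem lipschitzWith_upperApprox (k : ℕ) (x : X) :
    LipschitzWith k fun y => upperApprox R C k (x, y) := by
  refine LipschitzWith.ciSup (fun j => ?_) (bddAbove_range_approxTerm R C k x)
  by_cases h : IsActiveBall R C k j x
  · simpa only [approxTerm, if_pos h] using lipschitzWith_lipschitzCone k _ _ _
  · simpa only [approxTerm, if_neg h] using (LipschitzWith.const (-C)).weaken bot_le

theorem le_upperApprox {x : X} {y : Y} {v : ℝ} (hv : |v| ≤ C)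
    (hpos : ∀ j, (y, v) ∈ ratBall j → R x (ratBall j) ≠ 0) (k : ℕ) :
    v ≤ upperApprox R C k (x, y) := by
  obtain ⟨r, hr₀, hr⟩ := exists_rat_btwn (approxRadius_pos k)
  obtain ⟨i, hi⟩ := Metric.denseRange_iff.1 (denseRange_denseSeq Y) y r hr₀
  obtain ⟨q, hq₁, hq₂⟩ := exists_rat_btwn (sub_lt_self v hr₀)
  have hmem : (y, v) ∈ ratBall (i, q, r) := by
    refine ⟨Metric.mem_ball.2 hi, Metric.mem_ball.2 ?_⟩
    rw [Real.dist_eq, abs_lt]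
    constructor <;> linarith
  have hactive : IsActiveBall R C k (i, q, r) x := by
    refine ⟨abs_le.2 ⟨?_, ?_⟩, hr₀, hr.le, pos_iff_ne_zero.2 (hpos _ hmem)⟩ <;>
      linarith [abs_le.1 hv, approxRadius_le_one k]
  calc v ≤ q + r := by linarith
    _ = approxTerm R C k (i, q, r) x y := by
      rw [approxTerm, if_pos hactive, lipschitzCone_of_dist_le _ _ hi.le]
    _ ≤ upperApprox R C k (x, y) := le_ciSup (bddAbove_range_approxTerm R C k x y) _

theorem eventually_upperApprox_le {x : X} {g : Y → ℝ} (hconc : R x {z | g z.1 < z.2} = 0)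
    {y : Y} (hgy : UpperSemicontinuousAt g y) (hCy : -C ≤ g y) {η : ℝ} (hη : 0 < η) :
    ∀ᶠ k in atTop, upperApprox R C k (x, y) ≤ g y + η := by
  obtain ⟨ρ, hρ, hnear⟩ := Metric.eventually_nhds_iff.1 (hgy (g y + η / 2) (by linarith))
  filter_upwards [tendsto_natCast_atTop_atTop.eventually_ge_atTop ((2 * C + 4) / ρ),
    tendsto_approxRadius.eventually (ge_mem_nhds (by linarith : (0 : ℝ) < η / 4))] with k hkρ hkη
  refine ciSup_le fun j => ?_
  by_cases hj : IsActiveBall R C k j x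
  swap
  · simp only [approxTerm, if_neg hj]
    linarith
  simp only [approxTerm, if_pos hj]
  obtain ⟨hq, -, hr, hR⟩ := hj
  have hhyp : R x {z : Y × ℝ | z.2 ≤ g z.1}ᶜ = 0 := by
    simpa only [Set.compl_ofPred, not_le] using hconc
  obtain ⟨z, ⟨hz₁, hz₂⟩, hzg⟩ : (ratBall j ∩ {z : Y × ℝ | z.2 ≤ g z.1}).Nonempty :=
    nonempty_of_measure_ne_zero (by rw [measure_inter_conull hhyp]; exact hR.ne')
  rw [Metric.mem_ball, Real.dist_eq, abs_lt] at hz₂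
  by_cases hzy : dist z.1 y < ρ
  · have hgz : g z.1 < g y + η / 2 := hnear hzy
    linarith [lipschitzCone_le k (denseSeq Y j.1) j.2.1 j.2.2 y, show z.2 ≤ g z.1 from hzg]
  · -- far from `z.1` the cone has dropped below `-C`
    have hkρ' : 2 * C + 4 ≤ k * dist y z.1 := by
      rw [div_le_iff₀ hρ] at hkρ
      nlinarith [dist_comm y z.1, (Nat.cast_nonneg k : (0 : ℝ) ≤ k)]
    have hkr : (k : ℝ) * j.2.2 ≤ 1 :=
      (mul_le_mul_of_nonneg_left hr (Nat.cast_nonneg k)).trans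
        (natCast_mul_approxRadius_le_one k)
    linarith [lipschitzCone_le_of_dist_lt k j.2.1 (Metric.mem_ball.1 hz₁) y,
      le_abs_self (j.2.1 : ℝ), approxRadius_le_one k]

theorem tendsto_upperApprox {x : X} {g : Y → ℝ} (hconc : R x {z | g z.1 < z.2} = 0) {y : Y}
    (hgy : UpperSemicontinuousAt g y) (hCy : |g y| ≤ C)
    (hpos : ∀ j, (y, g y) ∈ ratBall j → R x (ratBall j) ≠ 0) :
    Tendsto (fun k => upperApprox R C k (x, y)) atTop (𝓝 (g y)) :=
  tendsto_order.2
    ⟨fun _ ha => Eventually.of_forall fun k => ha.trans_le (le_upperApprox R C hCy hpos k),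
      fun a ha => (eventually_upperApprox_le R C hconc hgy (neg_le_of_abs_le hCy)
        (half_pos (sub_pos.2 ha))).mono fun _ hk => by linarith⟩

variable [OpensMeasurableSpace Y]

theorem measurableSet_ratBall (j : ℕ × ℚ × ℚ) : MeasurableSet (ratBall (Y := Y) j) :=
  measurableSet_ball.prod measurableSet_ball

theorem measurableSet_isActiveBall (k : ℕ) (j : ℕ × ℚ × ℚ) :
    MeasurableSet {x | IsActiveBall R C k j x} := by
  simp only [IsActiveBall, Set.ofPred_and]
  exact (MeasurableSet.const _).inter <| (MeasurableSet.const _).inter <|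
    (MeasurableSet.const _).inter <|
      measurableSet_lt measurable_const (R.measurable_coe (measurableSet_ratBall j))

theorem measurable_upperApprox (k : ℕ) : Measurable (upperApprox R C k) :=
  Measurable.iSup fun j => Measurable.ite (measurable_fst (measurableSet_isActiveBall R C k j))
    ((lipschitzWith_lipschitzCone k _ _ _).continuous.measurable.comp measurable_snd)
    measurable_const

end UpperApprox

section Graph

variable {X Y : Type*} [MeasurableSpace X] [MeasurableSpace Y] [StandardBorelSpace Y]
  [Nonempty Y]

def graphKernel (L : Measure (X × Y)) [IsFiniteMeasure L] (u : X × Y → ℝ) :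
    Kernel X (Y × ℝ) :=
  (L.map fun p => (p.1, (p.2, u p))).condKernel

instance (L : Measure (X × Y)) [IsFiniteMeasure L] (u : X × Y → ℝ) :
    IsMarkovKernel (graphKernel L u) := by
  unfold graphKernel
  infer_instance

variable (L : Measure (X × Y)) [IsFiniteMeasure L] {u : X × Y → ℝ}

theorem ae_graphKernel_ne_zero_of_mem (hu : Measurable u) {ι : Type*} [Countable ι]
    {s : ι → Set (Y × ℝ)} (hs : ∀ i, MeasurableSet (s i)) :
    ∀ᵐ p ∂L, ∀ i, (p.2, u p) ∈ s i → graphKernel L u p.1 (s i) ≠ 0 := by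
  have h := Measure.ae_compProd_kernel_ne_zero_of_mem
    (L.map fun p => (p.1, (p.2, u p))).fst (graphKernel L u) hs
  rw [graphKernel, Measure.disintegrate] at h
  exact ae_of_ae_map (measurable_fst.prodMk (measurable_snd.prodMk hu)).aemeasurable h

theorem ae_graphKernel_hypograph (hu : Measurable u) :
    ∀ᵐ p ∂L, graphKernel L u p.1 {z | u (p.1, z.1) < z.2} = 0 := by
  set ρ := L.map fun p => (p.1, (p.2, u p))
  have hE : MeasurableSet {q : X × (Y × ℝ) | u (q.1, q.2.1) < q.2.2} :=
    measurableSet_lt (hu.comp (measurable_fst.prodMk measurable_snd.fst)) measurable_snd.snd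
  have hnull : (ρ.fst ⊗ₘ graphKernel L u) {q | u (q.1, q.2.1) < q.2.2} = 0 := by
    rw [graphKernel, Measure.disintegrate, Measure.map_apply
      (measurable_fst.prodMk (measurable_snd.prodMk hu)) hE]
    simp
  have h := Measure.ae_kernel_preimage_prodMk_eq_zero hnull
  rw [Measure.fst_map_prodMk₀ (measurable_snd.prodMk hu).aemeasurable] at h
  exact ae_of_ae_map measurable_fst.aemeasurable h

end Graph

theorem exists_caratheodory_approx {X Y : Type*} [MeasurableSpace X] [PseudoMetricSpace Y]
    [SeparableSpace Y] [Nonempty Y] [MeasurableSpace Y] [OpensMeasurableSpace Y]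
    [StandardBorelSpace Y] (L : Measure (X × Y)) [IsFiniteMeasure L] {u : X × Y → ℝ}
    (hu : Measurable u) {C : ℝ} (hC : ∀ p, |u p| ≤ C)
    (husc : ∀ x, UpperSemicontinuous fun y => u (x, y)) :
    ∃ T : ℕ → X × Y → ℝ, (∀ k, Measurable (T k)) ∧ (∃ B, ∀ k p, |T k p| ≤ B) ∧
      (∀ k x, Continuous fun y => T k (x, y)) ∧
      ∀ᵐ p ∂L, (∀ k, u p ≤ T k p) ∧ Tendsto (fun k => T k p) atTop (𝓝 (u p)) := by
  set R := graphKernel L u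
  refine ⟨upperApprox R C, measurable_upperApprox R C, ⟨|C| + 2, abs_upperApprox_le R C⟩,
    fun k x => (lipschitzWith_upperApprox R C k x).continuous, ?_⟩
  filter_upwards [ae_graphKernel_ne_zero_of_mem L hu measurableSet_ratBall,
    ae_graphKernel_hypograph L hu] with p hpos hconc
  exact ⟨le_upperApprox R C (hC p) hpos,
    tendsto_upperApprox R C hconc (husc p.1 p.2) (hC p) hpos⟩

end YoungMeasure

theorem young_measure_usc_integrand_limsup_general
    {X Y : Type*} [MeasurableSpace X]
    [MetricSpace Y] [CompactSpace Y] [MeasurableSpace Y] [BorelSpace Y]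
    (ν : ℕ → Measure (X × Y))
    (hν_prob : ∀ n, IsProbabilityMeasure (ν n))
    (νlim : Measure (X × Y)) (hνlim_prob : IsProbabilityMeasure νlim)
    (h_young : ∀ ψ : X × Y → ℝ, Measurable ψ → (∃ C, ∀ p, |ψ p| ≤ C) →
      (∀ x : X, Continuous (fun y : Y => ψ (x, y))) →
      Tendsto (fun n => ∫ p, ψ p ∂(ν n)) atTop (nhds (∫ p, ψ p ∂νlim)))
    (u : X × Y → ℝ) (hu_meas : Measurable u)
    (C : ℝ) (hu_bdd : ∀ p, |u p| ≤ C)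
    (hu_usc : ∀ x : X, UpperSemicontinuous (fun y : Y => u (x, y))) :
    limsup (fun n => ∫ p, u p ∂(ν n)) atTop ≤ ∫ p, u p ∂νlim := by
  have : Nonempty Y := (nonempty_of_isProbabilityMeasure (ν 0)).map Prod.snd
  set L := (Measure.sum ν + νlim).toFinite
  have hνL (n : ℕ) : ν n ≪ L :=
    (Measure.le_add_right (Measure.le_sum ν n)).absolutelyContinuous.trans
      (absolutelyContinuous_toFinite _)
  have hνlimL : νlim ≪ L :=
    (Measure.le_add_left le_rfl).absolutelyContinuous.trans (absolutelyContinuous_toFinite _)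
  obtain ⟨T, hT_meas, ⟨B, hTB⟩, hT_cont, hT⟩ :=
    YoungMeasure.exists_caratheodory_approx L hu_meas hu_bdd hu_usc
  have hlimsup (k : ℕ) : limsup (fun n => ∫ p, u p ∂ν n) atTop ≤ ∫ p, T k p ∂νlim :=
    limsup_integral_le_of_ae_le hu_meas hu_bdd
      (fun _ => Integrable.of_bound (hT_meas k).aestronglyMeasurable B (ae_of_all _ (hTB k)))
      (fun n => (hνL n).ae_le (hT.mono fun _ hp => hp.1 k))
      (h_young (T k) (hT_meas k) ⟨B, hTB k⟩ (hT_cont k))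
  have hconv : Tendsto (fun k => ∫ p, T k p ∂νlim) atTop (𝓝 (∫ p, u p ∂νlim)) :=
    tendsto_integral_of_dominated_convergence (fun _ => B)
      (fun k => (hT_meas k).aestronglyMeasurable) (integrable_const B)
      (fun k => ae_of_all _ (hTB k)) (hνlimL.ae_le (hT.mono fun _ hp => hp.2))
  exact ge_of_tendsto hconv (Eventually.of_forall hlimsup)

/-- Upper semicontinuity of integral functionals of fiberwise upper
semicontinuous bounded integrands along Young-measure convergent sequences of lifts. -/
theorem young_measure_usc_integrand_limsup
    {X Y : Type*} [MeasurableSpace X] [StandardBorelSpace X]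
    [MetricSpace Y] [CompactSpace Y] [MeasurableSpace Y] [BorelSpace Y]
    (μ : Measure X) [IsProbabilityMeasure μ]
    (ν : ℕ → Measure (X × Y))
    (hν_prob : ∀ n, IsProbabilityMeasure (ν n))
    (hν_fst : ∀ n, (ν n).map Prod.fst = μ)
    (νlim : Measure (X × Y)) (hνlim_prob : IsProbabilityMeasure νlim)
    (hνlim_fst : νlim.map Prod.fst = μ)
    (h_young : ∀ ψ : X × Y → ℝ, Measurable ψ → (∃ C, ∀ p, |ψ p| ≤ C) →
      (∀ x : X, Continuous (fun y : Y => ψ (x, y))) →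
      Tendsto (fun n => ∫ p, ψ p ∂(ν n)) atTop (nhds (∫ p, ψ p ∂νlim)))
    (u : X × Y → ℝ) (hu_meas : Measurable u)
    (C : ℝ) (hu_bdd : ∀ p, |u p| ≤ C)
    (hu_usc : ∀ x : X, UpperSemicontinuous (fun y : Y => u (x, y))) :
    limsup (fun n => ∫ p, u p ∂(ν n)) atTop ≤ ∫ p, u p ∂νlim :=
  young_measure_usc_integrand_limsup_general ν hν_prob νlim hνlim_prob h_young u hu_meas C hu_bdd
    hu_usc
end
end

section
/- Let X be a standard Borel space, Y a compact metric space, and μ a probability measure on X. Let (ν_n) be a sequence in Prob_μ(X × Y) converging to ν ∈ Prob_μ(X × Y) in the Young-measure topology. Let f : X × Y → ℝ be bounded measurable and let D_f := {(x,y) ∈ X × Y : the function y' ↦ f(x,y') is discontinuous at y}. If ν(D_f) = 0, then ∫ f dν_n → ∫ f dν as n → ∞. -/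
/-!
Dominate `νlim` and all `ν n` by one finite measure `ρ` and disintegrate it as `ρ = ρ.fst ⊗ κ`.
The envelopes `ψ k (x, y) = ess sup_{y' ∼ κ x} (f (x, y') - k d(y, y'))` are Carathéodory
(measurable, bounded, `k`-Lipschitz in `y`), dominate `f` `ρ`-a.e., and tend to `f` at every
point where `f` is continuous in `y`, hence `νlim`-a.e. Then
`limsup ∫ f dν n ≤ ∫ ψ k dνlim → ∫ f dνlim` by dominated convergence, and `-f` gives the liminf.
-/

open MeasureTheory Filter ProbabilityTheory Topology
open scoped NNReal

section BoundedEssSup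

variable {α : Type*} [MeasurableSpace α] {μ : Measure α} {f : α → ℝ} {B : ℝ}

lemma isBoundedUnder_le_ae_of_abs_le (hf : ∀ a, |f a| ≤ B) :
    IsBoundedUnder (· ≤ ·) (ae μ) f :=
  isBoundedUnder_of ⟨B, fun a => (le_abs_self _).trans (hf a)⟩

lemma isCoboundedUnder_le_ae_of_abs_le [NeZero μ] (hf : ∀ a, |f a| ≤ B) :
    IsCoboundedUnder (· ≤ ·) (ae μ) f :=
  (isBoundedUnder_of ⟨-B, fun a => (abs_le.1 (hf a)).1⟩).isCoboundedUnder_le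

lemma essSup_lt_iff_exists_rat [NeZero μ] (hf : ∀ a, |f a| ≤ B) {c : ℝ} :
    essSup f μ < c ↔ ∃ q : ℚ, (q : ℝ) < c ∧ μ {a | (q : ℝ) < f a} = 0 := by
  constructor
  · intro hc
    obtain ⟨q, hq, hqc⟩ := exists_rat_btwn hc
    refine ⟨q, hqc, measure_mono_null (fun a (ha : (q : ℝ) < f a) => ?_)
      (meas_essSup_lt (isBoundedUnder_le_ae_of_abs_le hf))⟩
    exact hq.trans ha
  · rintro ⟨q, hqc, hq⟩
    refine lt_of_le_of_lt (essSup_le_of_ae_le _ ?_ (isCoboundedUnder_le_ae_of_abs_le hf)) hqc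
    exact measure_eq_zero_iff_ae_notMem.1 hq |>.mono fun a ha => not_lt.1 ha

end BoundedEssSup

lemma measurable_essSup_kernel {α β : Type*} [MeasurableSpace α] [MeasurableSpace β]
    (κ : Kernel α β) [IsMarkovKernel κ] {F : α → β → ℝ} (hF : Measurable (Function.uncurry F))
    {B : ℝ} (hB : ∀ a b, |F a b| ≤ B) :
    Measurable fun a => essSup (F a) (κ a) := by
  refine measurable_of_Iio fun c => ?_
  have hset : (fun a => essSup (F a) (κ a)) ⁻¹' Set.Iio c =
      ⋃ q : {q : ℚ // (q : ℝ) < c},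
        {a | κ a (Prod.mk a ⁻¹' {p | (q : ℝ) < Function.uncurry F p}) = 0} := by
    ext a
    simp [essSup_lt_iff_exists_rat (hB a)]
  rw [hset]
  exact MeasurableSet.iUnion fun q =>
    Kernel.measurable_kernel_prodMk_left (measurableSet_lt measurable_const hF)
      (measurableSet_singleton 0)

lemma abs_sub_mul_dist_le {X Y : Type*} [PseudoMetricSpace Y] [BoundedSpace Y] {g : X × Y → ℝ}
    {C : ℝ} (hg : ∀ p, |g p| ≤ C) (L : ℝ≥0) (x : X) (y y' : Y) :
    |g (x, y') - L * dist y y'| ≤ C + L * Metric.diam (Set.univ : Set Y) := by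
  have hd : dist y y' ≤ Metric.diam (Set.univ : Set Y) :=
    Metric.dist_le_diam_of_mem BoundedSpace.bounded_univ trivial trivial
  have hL : (L : ℝ) * dist y y' ≤ L * Metric.diam (Set.univ : Set Y) := by gcongr
  have := hg (x, y')
  rw [abs_le] at this ⊢
  constructor <;> nlinarith [L.coe_nonneg, dist_nonneg (x := y) (y := y')]

section Envelope

variable {X Y : Type*} [MeasurableSpace X] [PseudoMetricSpace Y] [MeasurableSpace Y]

/-- The sup-convolution `sup_{y'} (g (x, y') - L d(y, y'))`, with the supremum taken essentially
with respect to `κ x`: unlike the pointwise supremum, this is measurable in `x`. -/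
noncomputable def essUpperEnvelope (κ : Kernel X Y) (L : ℝ≥0) (g : X × Y → ℝ) (p : X × Y) : ℝ :=
  essSup (fun y => g (p.1, y) - L * dist p.2 y) (κ p.1)

variable {κ : Kernel X Y} {L : ℝ≥0} {g : X × Y → ℝ} {C : ℝ} [BoundedSpace Y]

lemma ae_sub_mul_dist_le_essUpperEnvelope (hg : ∀ p, |g p| ≤ C) (p : X × Y) :
    ∀ᵐ y ∂κ p.1, g (p.1, y) - L * dist p.2 y ≤ essUpperEnvelope κ L g p :=
  ae_le_essSup (isBoundedUnder_le_ae_of_abs_le (abs_sub_mul_dist_le hg L _ _))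

lemma essUpperEnvelope_le_of_ae_le [IsMarkovKernel κ] (hg : ∀ p, |g p| ≤ C) {p : X × Y} {c : ℝ}
    (h : ∀ᵐ y ∂κ p.1, g (p.1, y) - L * dist p.2 y ≤ c) : essUpperEnvelope κ L g p ≤ c :=
  essSup_le_of_ae_le c h (isCoboundedUnder_le_ae_of_abs_le (abs_sub_mul_dist_le hg L _ _))

lemma essUpperEnvelope_le [IsMarkovKernel κ] (hg : ∀ p, |g p| ≤ C) (p : X × Y) :
    essUpperEnvelope κ L g p ≤ C :=
  essUpperEnvelope_le_of_ae_le hg <| ae_of_all _ fun y => by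
    nlinarith [(abs_le.1 (hg (p.1, y))).2, L.coe_nonneg, dist_nonneg (x := p.2) (y := y)]

lemma abs_essUpperEnvelope_le [IsMarkovKernel κ] (hg : ∀ p, |g p| ≤ C) (p : X × Y) :
    |essUpperEnvelope κ L g p| ≤ C + L * Metric.diam (Set.univ : Set Y) := by
  refine abs_le.2 ⟨le_limsup_of_frequently_le ?_ (isBoundedUnder_le_ae_of_abs_le
    (abs_sub_mul_dist_le hg L p.1 p.2)), (essUpperEnvelope_le hg p).trans ?_⟩
  · exact (ae_of_all _ fun y => (abs_le.1 (abs_sub_mul_dist_le hg L p.1 p.2 y)).1).frequently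
  · have : (0 : ℝ) ≤ L * Metric.diam (Set.univ : Set Y) := by positivity
    linarith

lemma measurable_essUpperEnvelope [IsMarkovKernel κ] [SecondCountableTopology Y]
    [OpensMeasurableSpace Y] (hg_meas : Measurable g) (hg : ∀ p, |g p| ≤ C) :
    Measurable (essUpperEnvelope κ L g) :=
  measurable_essSup_kernel (Kernel.prodMkRight Y κ)
    (F := fun p y => g (p.1, y) - L * dist p.2 y)
    (by fun_prop) (fun p y => abs_sub_mul_dist_le hg L p.1 p.2 y)

lemma lipschitzWith_essUpperEnvelope [IsMarkovKernel κ] (hg : ∀ p, |g p| ≤ C) (x : X) :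
    LipschitzWith L fun y => essUpperEnvelope κ L g (x, y) := by
  refine LipschitzWith.of_le_add_mul L fun y₁ y₂ => essUpperEnvelope_le_of_ae_le hg ?_
  filter_upwards [ae_sub_mul_dist_le_essUpperEnvelope (L := L) hg (x, y₂)] with y hy
  have := dist_triangle y₂ y₁ y
  rw [dist_comm y₂ y₁] at this
  nlinarith [L.coe_nonneg]

lemma eventually_essUpperEnvelope_lt [IsMarkovKernel κ] (hg : ∀ p, |g p| ≤ C) {p : X × Y}
    (hcont : ContinuousAt (fun y => g (p.1, y)) p.2) {c : ℝ} (hc : g p < c) :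
    ∀ᶠ k : ℕ in atTop, essUpperEnvelope κ k g p < c := by
  obtain ⟨m, hpm, hmc⟩ := exists_between hc
  obtain ⟨r, hr, hball⟩ := Metric.eventually_nhds_iff.1 (hcont.eventually (gt_mem_nhds hpm))
  filter_upwards [eventually_ge_atTop ⌈(C - m) / r⌉₊] with k hk
  refine (essUpperEnvelope_le_of_ae_le hg (ae_of_all _ fun y => ?_)).trans_lt hmc
  rcases lt_or_ge (dist y p.2) r with hy | hy
  · have := hball hy
    push_cast
    nlinarith [dist_nonneg (x := p.2) (y := y), (k.cast_nonneg : (0:ℝ) ≤ k)]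
  · have hkr : C - m ≤ k * r := by
      rw [← div_le_iff₀ hr]; exact (Nat.le_ceil _).trans (by exact_mod_cast hk)
    have := (abs_le.1 (hg (p.1, y))).2
    rw [dist_comm] at hy
    push_cast
    nlinarith [(k.cast_nonneg : (0:ℝ) ≤ k)]

lemma ae_le_essUpperEnvelope [HereditarilyLindelofSpace Y] [OpensMeasurableSpace Y]
    (hg_meas : Measurable g) (hg : ∀ p, |g p| ≤ C) (x : X) :
    ∀ᵐ y ∂κ x, g (x, y) ≤ essUpperEnvelope κ L g (x, y) := by
  have hgx : Measurable fun y => g (x, y) := hg_meas.comp measurable_prodMk_left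
  -- For a.e. `y` with `b < g (x, y)`, every ball around `y` meets `{b < g (x, ·)}` in positive
  -- `κ x`-measure; on a small ball the integrand exceeds there any `a < b`.
  have hsupp : ∀ q : ℚ, ∀ᵐ y ∂κ x, (q : ℝ) < g (x, y) →
      y ∈ ((κ x).restrict {y | (q : ℝ) < g (x, y)}).support := fun q =>
    (ae_restrict_iff' (measurableSet_lt measurable_const hgx)).1 Measure.support_mem_ae
  filter_upwards [ae_all_iff.2 hsupp] with y hy
  by_contra! hlt
  obtain ⟨a, ha, hab⟩ := exists_rat_btwn hlt
  obtain ⟨b, hab, hb⟩ := exists_rat_btwn hab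
  set r := ((b : ℝ) - a) / (L + 1)
  have hr : 0 < r := div_pos (by linarith) (by positivity)
  have hpos := (Measure.mem_support_iff_forall y).1 (hy b hb) _ (Metric.ball_mem_nhds y hr)
  rw [Measure.restrict_apply Metric.isOpen_ball.measurableSet] at hpos
  refine hpos.ne' (measure_mono_null (fun y' ⟨hy'r, hy'b⟩ => ?_)
    (meas_essSup_lt (isBoundedUnder_le_ae_of_abs_le (abs_sub_mul_dist_le hg L x y))))
  have hy'r : (L + 1) * dist y' y < b - a := by
    rw [Metric.mem_ball, lt_div_iff₀ (by positivity)] at hy'r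
    linarith
  have hb' : (b : ℝ) < g (x, y') := hy'b
  show essUpperEnvelope κ L g (x, y) < g (x, y') - L * dist y y'
  rw [dist_comm]
  nlinarith [dist_nonneg (x := y') (y := y)]

end Envelope

section CondKernel

variable {X Y : Type*} [MeasurableSpace X] [MetricSpace Y] [CompactSpace Y] [MeasurableSpace Y]
  [BorelSpace Y] [Nonempty Y] {ρ : Measure (X × Y)} [IsFiniteMeasure ρ] {g : X × Y → ℝ} {C : ℝ}

lemma ae_le_essUpperEnvelope_condKernel (hg_meas : Measurable g) (hg : ∀ p, |g p| ≤ C)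
    (L : ℝ≥0) :
    ∀ᵐ p ∂ρ, g p ≤ essUpperEnvelope ρ.condKernel L g p := by
  have h : ∀ᵐ p ∂ρ.fst ⊗ₘ ρ.condKernel, g p ≤ essUpperEnvelope ρ.condKernel L g p :=
    Measure.ae_compProd_of_ae_ae
      (measurableSet_le hg_meas (measurable_essUpperEnvelope hg_meas hg))
      (ae_of_all _ (ae_le_essUpperEnvelope hg_meas hg))
  rwa [ρ.disintegrate] at h

lemma tendsto_integral_essUpperEnvelope_condKernel (hg_meas : Measurable g) (hg : ∀ p, |g p| ≤ C)
    {ν : Measure (X × Y)} [IsFiniteMeasure ν] (hνρ : ν ≪ ρ)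
    (hcont : ∀ᵐ p ∂ν, ContinuousAt (fun y => g (p.1, y)) p.2) :
    Tendsto (fun k : ℕ => ∫ p, essUpperEnvelope ρ.condKernel k g p ∂ν) atTop
      (𝓝 (∫ p, g p ∂ν)) := by
  have hle : ∀ᵐ p ∂ν, ∀ k : ℕ, g p ≤ essUpperEnvelope ρ.condKernel k g p :=
    ae_all_iff.2 fun k => hνρ.ae_le (ae_le_essUpperEnvelope_condKernel hg_meas hg k)
  refine tendsto_integral_of_dominated_convergence (fun _ => C)
    (fun k => (measurable_essUpperEnvelope hg_meas hg).aestronglyMeasurable) (integrable_const C)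
    (fun k => hle.mono fun p hp => abs_le.2 ⟨(abs_le.1 (hg p)).1.trans (hp k),
      essUpperEnvelope_le hg p⟩) ?_
  filter_upwards [hle, hcont] with p hp hpc
  exact tendsto_order.2 ⟨fun c hc => Eventually.of_forall fun k => hc.trans_le (hp k),
    fun c hc => eventually_essUpperEnvelope_lt hg hpc hc⟩

end CondKernel

lemma eventually_lt_of_le_of_tendsto {ι κ : Type*} {l : Filter ι} {l' : Filter κ} [l'.NeBot]
    {a : ι → ℝ} {b : κ → ι → ℝ} {B : κ → ℝ} {I c : ℝ} (hab : ∀ k i, a i ≤ b k i)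
    (hb : ∀ k, Tendsto (b k) l (𝓝 (B k))) (hB : Tendsto B l' (𝓝 I)) (hc : I < c) :
    ∀ᶠ i in l, a i < c := by
  obtain ⟨k, hk⟩ := (hB.eventually (gt_mem_nhds hc)).exists
  exact ((hb k).eventually (gt_mem_nhds hk)).mono fun i hi => (hab k i).trans_lt hi

lemma eventually_integral_lt_of_forall_caratheodory_tendsto
    {X Y : Type*} [MeasurableSpace X] [MetricSpace Y] [CompactSpace Y] [MeasurableSpace Y]
    [BorelSpace Y] [Nonempty Y] {ν : ℕ → Measure (X × Y)} [∀ n, IsFiniteMeasure (ν n)]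
    {νlim : Measure (X × Y)} [IsFiniteMeasure νlim]
    (h_young : ∀ ψ : X × Y → ℝ, Measurable ψ → (∃ C, ∀ p, |ψ p| ≤ C) →
      (∀ x : X, Continuous (fun y : Y => ψ (x, y))) →
      Tendsto (fun n => ∫ p, ψ p ∂(ν n)) atTop (𝓝 (∫ p, ψ p ∂νlim)))
    {ρ : Measure (X × Y)} [IsFiniteMeasure ρ] (hνρ : ∀ n, ν n ≪ ρ) (hlimρ : νlim ≪ ρ)
    {f : X × Y → ℝ} (hf_meas : Measurable f) {C : ℝ} (hf_bdd : ∀ p, |f p| ≤ C)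
    (hcont : ∀ᵐ p ∂νlim, ContinuousAt (fun y => f (p.1, y)) p.2) {c : ℝ}
    (hc : ∫ p, f p ∂νlim < c) :
    ∀ᶠ n in atTop, ∫ p, f p ∂(ν n) < c := by
  set ψ : ℕ → X × Y → ℝ := fun k => essUpperEnvelope ρ.condKernel k f
  have hψ_meas : ∀ k, Measurable (ψ k) := fun k => measurable_essUpperEnvelope hf_meas hf_bdd
  have hψ_young : ∀ k, Tendsto (fun n => ∫ p, ψ k p ∂(ν n)) atTop (𝓝 (∫ p, ψ k p ∂νlim)) :=
    fun k => h_young (ψ k) (hψ_meas k) ⟨_, abs_essUpperEnvelope_le hf_bdd⟩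
      fun x => (lipschitzWith_essUpperEnvelope hf_bdd x).continuous
  have hf_le_ψ : ∀ k n, ∫ p, f p ∂(ν n) ≤ ∫ p, ψ k p ∂(ν n) := fun k n =>
    integral_mono_ae
      (.of_bound hf_meas.aestronglyMeasurable C (ae_of_all _ hf_bdd))
      (.of_bound (hψ_meas k).aestronglyMeasurable _ (ae_of_all _ (abs_essUpperEnvelope_le hf_bdd)))
      ((hνρ n).ae_le (ae_le_essUpperEnvelope_condKernel hf_meas hf_bdd k))
  exact eventually_lt_of_le_of_tendsto hf_le_ψ hψ_young
    (tendsto_integral_essUpperEnvelope_condKernel hf_meas hf_bdd hlimρ hcont) hc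

theorem young_measure_ae_continuous_integrand_general
    {X Y : Type*} [MeasurableSpace X]
    [MetricSpace Y] [CompactSpace Y] [MeasurableSpace Y] [BorelSpace Y]
    (ν : ℕ → Measure (X × Y))
    (hν_prob : ∀ n, IsProbabilityMeasure (ν n))
    (νlim : Measure (X × Y)) (hνlim_prob : IsProbabilityMeasure νlim)
    (h_young : ∀ ψ : X × Y → ℝ, Measurable ψ → (∃ C, ∀ p, |ψ p| ≤ C) →
      (∀ x : X, Continuous (fun y : Y => ψ (x, y))) →
      Tendsto (fun n => ∫ p, ψ p ∂(ν n)) atTop (nhds (∫ p, ψ p ∂νlim)))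
    (f : X × Y → ℝ) (hf_meas : Measurable f)
    (C : ℝ) (hf_bdd : ∀ p, |f p| ≤ C)
    (hDf : νlim {p : X × Y | ¬ ContinuousAt (fun y : Y => f (p.1, y)) p.2} = 0) :
    Tendsto (fun n => ∫ p, f p ∂(ν n)) atTop (nhds (∫ p, f p ∂νlim)) := by
  have : Nonempty Y := ⟨(nonempty_of_isProbabilityMeasure νlim).some.2⟩
  set ρ := (νlim + Measure.sum ν).toFinite
  have hlimρ : νlim ≪ ρ := (Measure.le_add_right le_rfl).absolutelyContinuous.trans
    (absolutelyContinuous_toFinite _)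
  have hνρ : ∀ n, ν n ≪ ρ := fun n =>
    (Measure.le_add_left (Measure.le_sum ν n)).absolutelyContinuous.trans
      (absolutelyContinuous_toFinite _)
  have hcont : ∀ᵐ p ∂νlim, ContinuousAt (fun y => f (p.1, y)) p.2 := by
    simpa [ae_iff] using hDf
  refine tendsto_order.2 ⟨fun c hc => ?_, fun c hc =>
    eventually_integral_lt_of_forall_caratheodory_tendsto h_young hνρ hlimρ hf_meas hf_bdd hcont hc⟩
  have hneg := eventually_integral_lt_of_forall_caratheodory_tendsto h_young hνρ hlimρ
    (f := fun p => -f p) hf_meas.neg (C := C) (by simpa using hf_bdd)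
    (hcont.mono fun p hp => hp.neg) (c := -c) (by rw [integral_neg]; linarith)
  simpa [integral_neg] using hneg

/-- Young-measure convergence of integrals for bounded integrands whose
set of fiberwise discontinuity points is null for the limit measure. -/
theorem young_measure_ae_continuous_integrand
    {X Y : Type*} [MeasurableSpace X] [StandardBorelSpace X]
    [MetricSpace Y] [CompactSpace Y] [MeasurableSpace Y] [BorelSpace Y]
    (μ : Measure X) [IsProbabilityMeasure μ]
    (ν : ℕ → Measure (X × Y))
    (hν_prob : ∀ n, IsProbabilityMeasure (ν n))
    (hν_fst : ∀ n, (ν n).map Prod.fst = μ)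
    (νlim : Measure (X × Y)) (hνlim_prob : IsProbabilityMeasure νlim)
    (hνlim_fst : νlim.map Prod.fst = μ)
    (h_young : ∀ ψ : X × Y → ℝ, Measurable ψ → (∃ C, ∀ p, |ψ p| ≤ C) →
      (∀ x : X, Continuous (fun y : Y => ψ (x, y))) →
      Tendsto (fun n => ∫ p, ψ p ∂(ν n)) atTop (nhds (∫ p, ψ p ∂νlim)))
    (f : X × Y → ℝ) (hf_meas : Measurable f)
    (C : ℝ) (hf_bdd : ∀ p, |f p| ≤ C)
    (hDf : νlim {p : X × Y | ¬ ContinuousAt (fun y : Y => f (p.1, y)) p.2} = 0) :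
    Tendsto (fun n => ∫ p, f p ∂(ν n)) atTop (nhds (∫ p, f p ∂νlim)) :=
  young_measure_ae_continuous_integrand_general ν hν_prob νlim hνlim_prob h_young f hf_meas C hf_bdd
    hDf
end
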